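/- arXiv:1501.02754 — 3 statements merged into one kernel-verified Lean document; each statement's English description precedes it below -/
import Mathlib

section
/- Let A and B be self-adjoint operators on a complex Hilbert space H and x ∈ Dom(AB) ∩ Dom(BA). For all real a, b, equality ‖(A - a)x‖ · ‖(B - b)x‖ = (1/2)|⟨[A,B]x, x⟩| holds if and only if (A - a)x and (B - b)x are purely imaginary scalar multiples of one another. -/
/-!
Write `u = (A - a)x` and `v = (B - b)x`. Shifting by real scalars keeps `A` and `B` symmetric
and leaves their commutator unchanged, so `⟪[A, B]x, x⟫ = ⟪v, u⟫ - ⟪u, v⟫ = 2i Im ⟪v, u⟫`.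
Since `|Im ⟪v, u⟫| ≤ ‖⟪v, u⟫‖ ≤ ‖u‖ ‖v‖`, equality forces equality in Cauchy–Schwarz, so `u` is a
multiple of `v`, and a vanishing real part of `⟪v, u⟫`, so that multiple is purely imaginary.
-/

open Complex
open scoped InnerProductSpace ComplexConjugate

namespace LinearMap.IsSymmetric

variable {𝕜 E : Type*} [RCLike 𝕜] [NormedAddCommGroup E] [InnerProductSpace 𝕜 E]
  {A B : E →ₗ[𝕜] E}

theorem inner_commutator_self (hA : A.IsSymmetric) (hB : B.IsSymmetric) (x : E) :
    ⟪A (B x) - B (A x), x⟫_𝕜 = ⟪B x, A x⟫_𝕜 - ⟪A x, B x⟫_𝕜 := by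
  rw [inner_sub_left, hA (B x) x, hB (A x) x]

theorem inner_commutator_self_eq_sub (hA : A.IsSymmetric) (hB : B.IsSymmetric)
    {a b : 𝕜} (ha : conj a = a) (hb : conj b = b) (x : E) :
    ⟪A (B x) - B (A x), x⟫_𝕜 = ⟪B x - b • x, A x - a • x⟫_𝕜 - ⟪A x - a • x, B x - b • x⟫_𝕜 := by
  have h := (hA.sub (IsSymmetric.id.smul ha)).inner_commutator_self
    (hB.sub (IsSymmetric.id.smul hb)) x
  simp only [sub_apply, smul_apply, id_apply, map_sub, map_smul] at h
  rw [← h]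
  congr 1
  module

end LinearMap.IsSymmetric

theorem Complex.norm_sub_conj (z : ℂ) : ‖z - conj z‖ = 2 * |z.im| := by
  rw [sub_conj, norm_mul, norm_I, mul_one, norm_real, Real.norm_eq_abs, abs_mul, abs_two]

section CauchySchwarz

variable {H : Type*} [NormedAddCommGroup H] [InnerProductSpace ℂ H]

theorem abs_im_inner_I_mul_smul_right (u : H) (t : ℝ) :
    |(⟪u, (I * t) • u⟫_ℂ).im| = ‖(I * t) • u‖ * ‖u‖ := by
  rw [inner_smul_right, inner_self_eq_norm_sq_to_K, norm_smul, norm_mul, norm_I, one_mul,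
    norm_real, Real.norm_eq_abs]
  simp only [coe_algebraMap, ← ofReal_pow, mul_im, mul_re, I_re, I_im, ofReal_re, ofReal_im,
    zero_mul, mul_zero, sub_self, one_mul, zero_add, abs_mul, abs_pow, abs_norm]
  ring

theorem exists_I_mul_smul_of_norm_mul_norm_eq_abs_im_inner {u v : H}
    (h : ‖u‖ * ‖v‖ = |(⟪v, u⟫_ℂ).im|) :
    ∃ t : ℝ, u = (I * t) • v ∨ v = (I * t) • u := by
  rcases eq_or_ne v 0 with rfl | hv
  · exact ⟨0, .inr (by simp)⟩
  set z := ⟪v, u⟫_ℂ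
  have hnorm : ‖z‖ = ‖v‖ * ‖u‖ :=
    le_antisymm (norm_inner_le_norm v u) (by linarith [abs_im_le_norm z])
  have hre : z.re = 0 := abs_im_eq_norm.mp (by linarith)
  have hu : v = 0 ∨ u = (z / ⟪v, v⟫_ℂ) • v := ((norm_inner_eq_norm_tfae ℂ v u).out 0 1).mp hnorm
  refine ⟨z.im / ‖v‖ ^ 2, .inl ?_⟩
  rw [hu.resolve_left hv, inner_self_eq_norm_sq_to_K]
  congr 1
  apply Complex.ext <;> simp [hre, ← ofReal_pow, div_ofReal_re, div_ofReal_im]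

theorem norm_mul_norm_eq_abs_im_inner_iff (u v : H) :
    ‖u‖ * ‖v‖ = |(⟪v, u⟫_ℂ).im| ↔ ∃ t : ℝ, u = (I * t) • v ∨ v = (I * t) • u := by
  refine ⟨exists_I_mul_smul_of_norm_mul_norm_eq_abs_im_inner, ?_⟩
  rintro ⟨t, rfl | rfl⟩
  · exact (abs_im_inner_I_mul_smul_right v t).symm
  · rw [← abs_neg, ← conj_im, inner_conj_symm, abs_im_inner_I_mul_smul_right, mul_comm]

end CauchySchwarz

/-- Equality case in the Robertson uncertainty inequality: equality holds iff
`(A - a)x` and `(B - b)x` are purely imaginary scalar multiples of one another. -/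
theorem uncertainty_principle_equality_iff
    {H : Type*} [NormedAddCommGroup H] [InnerProductSpace ℂ H]
    (A B : H →ₗ[ℂ] H)
    (hA : ∀ x y : H, (inner ℂ (A x) y : ℂ) = inner ℂ x (A y))
    (hB : ∀ x y : H, (inner ℂ (B x) y : ℂ) = inner ℂ x (B y))
    (x : H) (a b : ℝ) :
    ‖A x - (a : ℂ) • x‖ * ‖B x - (b : ℂ) • x‖ =
        (1 / 2) * ‖(inner ℂ (A (B x) - B (A x)) x : ℂ)‖ ↔
      ∃ t : ℝ, A x - (a : ℂ) • x = (Complex.I * t) • (B x - (b : ℂ) • x) ∨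
        B x - (b : ℂ) • x = (Complex.I * t) • (A x - (a : ℂ) • x) := by
  rw [LinearMap.IsSymmetric.inner_commutator_self_eq_sub hA hB (conj_ofReal a) (conj_ofReal b) x,
    ← inner_conj_symm (A x - (a : ℂ) • x),
    Complex.norm_sub_conj, one_div, inv_mul_cancel_left₀ two_ne_zero]
  exact norm_mul_norm_eq_abs_im_inner_iff _ _
end

section
/- Let r be a complex number and C ≠ 0. If the function f(z) = C·exp(r·z² + s·z) (s any complex constant) satisfies lim_{z→∞} f(z)e^{-|z|²/2} = 0, then |r| ≤ 1/2. In particular, if r = (c-1)/(2(c+1)) for a real c ≠ -1, then c ≥ 0. -/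
/-!
Rotate so that `r z²` becomes real and nonnegative: if `b² r = ‖r‖` with `‖b‖ = 1`, then along
the ray `z = t b` the weighted function has modulus `‖C‖ exp ((‖r‖ - 1/2) t² + O(t))`, which
blows up when `‖r‖ > 1/2`. For `r = (c - 1)/(2(c + 1))` the bound reads `|c - 1| ≤ |c + 1|`,
i.e. `c ≥ 0`.
-/

open Filter Bornology Complex

lemma exists_norm_eq_one_sq_mul_eq_norm (r : ℂ) : ∃ b : ℂ, ‖b‖ = 1 ∧ b ^ 2 * r = ‖r‖ := by
  refine ⟨exp (↑(-(arg r / 2)) * I), norm_exp_ofReal_mul_I _, ?_⟩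
  calc exp (↑(-(arg r / 2)) * I) ^ 2 * r
      = exp (-(arg r * I)) * (‖r‖ * exp (arg r * I)) := by
        rw [norm_mul_exp_arg_mul_I, ← exp_nat_mul]
        congr 2
        push_cast
        ring
    _ = ‖r‖ := by rw [mul_left_comm, ← exp_add, neg_add_cancel, exp_zero, mul_one]

lemma tendsto_ofReal_mul_cobounded {b : ℂ} (hb : b ≠ 0) :
    Tendsto (fun t : ℝ => (t : ℂ) * b) atTop (cobounded ℂ) := by
  rw [← tendsto_norm_atTop_iff_cobounded]
  simp only [norm_mul, norm_real, Real.norm_eq_abs]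
  exact (tendsto_abs_atTop_atTop).atTop_mul_const (norm_pos_iff.mpr hb)

lemma norm_mul_exp_mul_gaussian_ofReal_mul {r b : ℂ} (hb : ‖b‖ = 1) (hbr : b ^ 2 * r = ‖r‖)
    (s C : ℂ) (t : ℝ) :
    ‖C * exp (r * (t * b) ^ 2 + s * (t * b)) * (Real.exp (-‖(t : ℂ) * b‖ ^ 2 / 2) : ℂ)‖ =
      ‖C‖ * Real.exp ((‖r‖ - 1 / 2) * t ^ 2 + (s * b).re * t) := by
  have hquad : r * (t * b) ^ 2 = ((‖r‖ * t ^ 2 : ℝ) : ℂ) := by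
    push_cast
    rw [← hbr]
    ring
  have hre : (r * (t * b) ^ 2 + s * (t * b)).re = ‖r‖ * t ^ 2 + (s * b).re * t := by
    rw [hquad, add_re, ofReal_re, mul_comm s, mul_assoc, mul_comm b, re_ofReal_mul,
      mul_comm (t : ℝ)]
  rw [norm_mul, norm_mul, norm_exp, hre, norm_real, Real.norm_of_nonneg (Real.exp_pos _).le,
    norm_mul, norm_real, hb, mul_one, Real.norm_eq_abs, sq_abs, mul_assoc, ← Real.exp_add]
  ring_nf

lemma tendsto_exp_quadratic_atTop {a β : ℝ} (ha : 0 < a) :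
    Tendsto (fun t : ℝ => Real.exp (a * t ^ 2 + β * t)) atTop atTop := by
  refine Real.tendsto_exp_atTop.comp ?_
  have hlin : Tendsto (fun t : ℝ => a * t + β) atTop atTop :=
    tendsto_atTop_add_const_right _ _ (tendsto_id.const_mul_atTop ha)
  convert tendsto_id.atTop_mul_atTop₀ hlin using 2 with t
  simp only [id]
  ring

theorem norm_le_half_of_tendsto_mul_exp_gaussian_zero {r s C : ℂ} (hC : C ≠ 0)
    (h : Tendsto (fun z : ℂ => C * exp (r * z ^ 2 + s * z) * Real.exp (-‖z‖ ^ 2 / 2))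
      (cobounded ℂ) (nhds 0)) :
    ‖r‖ ≤ 1 / 2 := by
  by_contra! hr
  obtain ⟨b, hb, hbr⟩ := exists_norm_eq_one_sq_mul_eq_norm r
  have hb0 : b ≠ 0 := norm_ne_zero_iff.mp (hb.trans_ne one_ne_zero)
  have hray := (h.comp (tendsto_ofReal_mul_cobounded hb0)).norm
  simp only [Function.comp_def, norm_mul_exp_mul_gaussian_ofReal_mul hb hbr, norm_zero] at hray
  exact not_tendsto_nhds_of_tendsto_atTop
    ((tendsto_exp_quadratic_atTop (sub_pos.mpr hr)).const_mul_atTop (norm_pos_iff.mpr hC)) 0 hray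

lemma nonneg_of_norm_div_le_half {c : ℝ} (hc : c ≠ -1)
    (h : ‖((c : ℂ) - 1) / (2 * ((c : ℂ) + 1))‖ ≤ 1 / 2) : 0 ≤ c := by
  have hc1 : 0 < |c + 1| := abs_pos.mpr (by contrapose! hc; linarith)
  have habs : |c - 1| ≤ |c + 1| := by
    rw [norm_div, norm_mul, ← ofReal_one, ← ofReal_sub, ← ofReal_add, norm_real, norm_real,
      Complex.norm_two, Real.norm_eq_abs, Real.norm_eq_abs, div_le_iff₀ (by positivity)] at h
    linarith
  nlinarith [sq_le_sq.mpr habs]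

/-- If `f(z) = C·exp(r z² + s z)` with `C ≠ 0` satisfies
`f(z)e^{-|z|²/2} → 0` as `z → ∞`, then `|r| ≤ 1/2`; in particular if
`r = (c-1)/(2(c+1))` with real `c ≠ -1`, then `c ≥ 0`. -/
theorem gaussian_decay_necessary (r s C : ℂ) (hC : C ≠ 0)
    (h : Tendsto (fun z : ℂ =>
        C * Complex.exp (r * z ^ 2 + s * z) * Real.exp (-‖z‖ ^ 2 / 2))
      (cobounded ℂ) (nhds 0)) :
    ‖r‖ ≤ 1 / 2 ∧
      ∀ c : ℝ, c ≠ -1 → r = ((c : ℂ) - 1) / (2 * ((c : ℂ) + 1)) → 0 ≤ c := by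
  have hr := norm_le_half_of_tendsto_mul_exp_gaussian_zero hC h
  exact ⟨hr, fun c hc hrc => nonneg_of_norm_div_le_half hc (hrc ▸ hr)⟩
end

section
/- Let D be an operator with [D, D*] = I on a complex Hilbert space, x a unit vector in Dom(DD*) ∩ Dom(D*D) with Dx + D*x ≠ 0 and Dx - D*x ≠ 0. Letting θ₊, θ₋ be the angles between x and Dx + D*x, respectively x and Dx - D*x, one has ‖Dx + D*x‖ · ‖Dx - D*x‖ · |sin θ₊ · sin θ₋| ≥ 1. -/
/-!
Let `P w = w - ⟪x, w⟫ • x` be the projection onto `x^⊥`, so that `‖w‖ sin θ = ‖P w‖` for the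
angle `θ` between `w` and `x`. With `u = Dx + D*x` and `v = Dx - D*x`, the number `⟪u, x⟫` is
real and `⟪x, v⟫` is purely imaginary, hence `Re ⟪P u, P v⟫ = Re ⟪u, v⟫ = ‖Dx‖² - ‖D*x‖²`,
which is `-‖x‖² = -1` by `[D, D*] = I`. Cauchy–Schwarz then gives `‖P u‖ ‖P v‖ ≥ 1`.
-/

section InnerProductSpace

variable {𝕜 E : Type*} [RCLike 𝕜] [NormedAddCommGroup E] [InnerProductSpace 𝕜 E]

local notation "⟪" a ", " b "⟫" => inner 𝕜 a b

theorem re_inner_add_sub (a b : E) : RCLike.re ⟪a + b, a - b⟫ = ‖a‖ ^ 2 - ‖b‖ ^ 2 := by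
  simp only [inner_add_left, inner_sub_right, map_add, map_sub, inner_self_eq_norm_sq,
    inner_re_symm b a]
  ring

variable {x : E}

theorem inner_sub_inner_smul_self (hx : ‖x‖ = 1) (w : E) : ⟪x, w - ⟪x, w⟫ • x⟫ = 0 := by
  simp [inner_sub_right, inner_smul_right, inner_self_eq_norm_sq_to_K, hx]

theorem norm_sub_inner_smul_self_sq (hx : ‖x‖ = 1) (w : E) :
    ‖w - ⟪x, w⟫ • x‖ ^ 2 = ‖w‖ ^ 2 - ‖⟪w, x⟫‖ ^ 2 := by
  have hpyth := norm_add_sq_eq_norm_sq_add_norm_sq_of_inner_eq_zero (𝕜 := 𝕜) (⟪x, w⟫ • x)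
    (w - ⟪x, w⟫ • x) (by rw [inner_smul_left, inner_sub_inner_smul_self hx, mul_zero])
  rw [add_sub_cancel, norm_smul, hx, mul_one, norm_inner_symm] at hpyth
  linarith

theorem inner_sub_inner_smul_self_sub_inner_smul_self (hx : ‖x‖ = 1) (a b : E) :
    ⟪a - ⟪x, a⟫ • x, b - ⟪x, b⟫ • x⟫ = ⟪a, b⟫ - ⟪a, x⟫ * ⟪x, b⟫ := by
  rw [inner_sub_left, inner_smul_left, inner_sub_inner_smul_self hx, mul_zero, sub_zero,
    inner_sub_right, inner_smul_right, mul_comm]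

theorem norm_mul_sin_arccos (hx : ‖x‖ = 1) (w : E) :
    ‖w‖ * Real.sin (Real.arccos (‖⟪w, x⟫‖ / (‖w‖ * ‖x‖))) = ‖w - ⟪x, w⟫ • x‖ := by
  rcases eq_or_ne w 0 with rfl | hne
  · simp
  have hw : 0 < ‖w‖ := norm_pos_iff.mpr hne
  have hsq : ‖w‖ ^ 2 - ‖⟪w, x⟫‖ ^ 2 = ‖w‖ ^ 2 * (1 - (‖⟪w, x⟫‖ / ‖w‖) ^ 2) := by
    field_simp
  rw [hx, mul_one, Real.sin_arccos, ← Real.sqrt_sq (norm_nonneg (w - _)),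
    norm_sub_inner_smul_self_sq hx, hsq, Real.sqrt_mul (sq_nonneg _), Real.sqrt_sq hw.le]

end InnerProductSpace

section CanonicalCommutation

variable {H : Type*} [NormedAddCommGroup H] [InnerProductSpace ℂ H] {D Dstar : H →ₗ[ℂ] H}

local notation "⟪" a ", " b "⟫" => inner ℂ a b

theorem norm_sq_sub_norm_sq_of_ccr (hadj : ∀ x y : H, ⟪D x, y⟫ = ⟪x, Dstar y⟫)
    (hccr : ∀ y : H, D (Dstar y) - Dstar (D y) = y) (y : H) :
    ‖Dstar y‖ ^ 2 - ‖D y‖ ^ 2 = ‖y‖ ^ 2 := by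
  have h := congrArg (fun z => RCLike.re ⟪z, y⟫) (hccr y)
  simp only [inner_sub_left, map_sub] at h
  rw [hadj, inner_re_symm (Dstar (D y)), ← hadj y] at h
  simpa only [inner_self_eq_norm_sq] using h

theorem re_inner_add_mul_inner_sub (hadj : ∀ x y : H, ⟪D x, y⟫ = ⟪x, Dstar y⟫) (y : H) :
    (⟪D y + Dstar y, y⟫ * ⟪y, D y - Dstar y⟫).re = 0 := by
  rw [inner_add_left, inner_sub_right, ← inner_conj_symm (Dstar y), ← inner_conj_symm y (D y),
    ← hadj]
  simp only [Complex.mul_re, Complex.add_re, Complex.sub_re, Complex.add_im, Complex.sub_im,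
    Complex.conj_re, Complex.conj_im]
  ring

theorem re_inner_sub_inner_smul_self_of_ccr (hadj : ∀ x y : H, ⟪D x, y⟫ = ⟪x, Dstar y⟫)
    (hccr : ∀ y : H, D (Dstar y) - Dstar (D y) = y) {x : H} (hx : ‖x‖ = 1) :
    (⟪D x + Dstar x - ⟪x, D x + Dstar x⟫ • x, D x - Dstar x - ⟪x, D x - Dstar x⟫ • x⟫).re
      = -1 := by
  rw [inner_sub_inner_smul_self_sub_inner_smul_self hx, Complex.sub_re,
    re_inner_add_mul_inner_sub hadj, sub_zero, ← RCLike.re_to_complex, re_inner_add_sub]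
  linarith [hx ▸ norm_sq_sub_norm_sq_of_ccr hadj hccr x]

theorem one_le_norm_mul_norm_sub_inner_smul_self_of_ccr
    (hadj : ∀ x y : H, ⟪D x, y⟫ = ⟪x, Dstar y⟫)
    (hccr : ∀ y : H, D (Dstar y) - Dstar (D y) = y) {x : H} (hx : ‖x‖ = 1) :
    1 ≤ ‖D x + Dstar x - ⟪x, D x + Dstar x⟫ • x‖ * ‖D x - Dstar x - ⟪x, D x - Dstar x⟫ • x‖ := by
  have h := re_inner_le_norm (𝕜 := ℂ) (-(D x + Dstar x - ⟪x, D x + Dstar x⟫ • x))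
    (D x - Dstar x - ⟪x, D x - Dstar x⟫ • x)
  rwa [inner_neg_left, map_neg, RCLike.re_to_complex,
    re_inner_sub_inner_smul_self_of_ccr hadj hccr hx, neg_neg, norm_neg] at h

end CanonicalCommutation

theorem uncertainty_angle_version_general
    {H : Type*} [NormedAddCommGroup H] [InnerProductSpace ℂ H]
    (D Dstar : H →ₗ[ℂ] H)
    (hadj : ∀ x y : H, (inner ℂ (D x) y : ℂ) = inner ℂ x (Dstar y))
    (hccr : ∀ y : H, D (Dstar y) - Dstar (D y) = y)
    (x : H) (hx : ‖x‖ = 1) :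
    ‖D x + Dstar x‖ * ‖D x - Dstar x‖ *
      |Real.sin (Real.arccos
          (‖(inner ℂ (D x + Dstar x) x : ℂ)‖ / (‖D x + Dstar x‖ * ‖x‖))) *
        Real.sin (Real.arccos
          (‖(inner ℂ (D x - Dstar x) x : ℂ)‖ / (‖D x - Dstar x‖ * ‖x‖)))| ≥ 1 := by
  have sin_arccos_nonneg (t : ℝ) : 0 ≤ Real.sin (Real.arccos t) :=
    Real.sin_nonneg_of_nonneg_of_le_pi (Real.arccos_nonneg t) (Real.arccos_le_pi t)
  rw [ge_iff_le, abs_of_nonneg (mul_nonneg (sin_arccos_nonneg _) (sin_arccos_nonneg _)),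
    mul_mul_mul_comm, norm_mul_sin_arccos hx, norm_mul_sin_arccos hx]
  exact one_le_norm_mul_norm_sub_inner_smul_self_of_ccr hadj hccr hx

/-- Angle version of the uncertainty principle: for `[D,D*] = I`, a unit vector
`x`, and angles `θ₊`, `θ₋` between `x` and `Dx ± D*x`,
`‖Dx + D*x‖·‖Dx - D*x‖·|sin θ₊ · sin θ₋| ≥ 1`. -/
theorem uncertainty_angle_version
    {H : Type*} [NormedAddCommGroup H] [InnerProductSpace ℂ H]
    (D Dstar : H →ₗ[ℂ] H)
    (hadj : ∀ x y : H, (inner ℂ (D x) y : ℂ) = inner ℂ x (Dstar y))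
    (hccr : ∀ y : H, D (Dstar y) - Dstar (D y) = y)
    (x : H) (hx : ‖x‖ = 1)
    (hp : D x + Dstar x ≠ 0) (hm : D x - Dstar x ≠ 0) :
    ‖D x + Dstar x‖ * ‖D x - Dstar x‖ *
      |Real.sin (Real.arccos
          (‖(inner ℂ (D x + Dstar x) x : ℂ)‖ / (‖D x + Dstar x‖ * ‖x‖))) *
        Real.sin (Real.arccos
          (‖(inner ℂ (D x - Dstar x) x : ℂ)‖ / (‖D x - Dstar x‖ * ‖x‖)))| ≥ 1 :=
  uncertainty_angle_version_general D Dstar hadj hccr x hx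
end
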